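/- Let H > 0, d ≥ 1, ρ : ℝ^d → ℝ continuously differentiable, S = ρ⁻¹({0}), and r : ℝ^d → ℝ^d continuous with ⟨r(z), ∇ρ(z)⟩ ≠ 0 for every z ∈ S. Let γ : [0,H] → ℝ^d be a piecewise integral curve of r with jump times 0 = t₀ < t₁ < ⋯ < t_k < t_{k+1} = H and pieces g_i, avoiding S at endpoints and jumps. Then the continuous crossing set C_S(γ) is finite and (1/(2δ)) ∫₀^H |⟨r(γ(t)), ∇ρ(γ(t))⟩| · 1_{|ρ(γ(t))| ≤ δ} dt tends to the cardinality of C_S(γ) as δ → 0⁺. (Pathwise Kac counting formula for hypersurface crossings via a defining function.) -/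

import Mathlib

/-!
On the `i`-th piece, `φ = ρ ∘ gᵢ` has derivative `ψ = ⟪r, ∇ρ⟫ ∘ gᵢ`, which does not vanish at the
zeros of `φ`; these zeros are therefore isolated, hence finite in number, and they lie in the open
interval because `γ` avoids `S` at the jump times; so `C_S(γ)` is the disjoint union of these
finite zero sets. Around each zero `φ` is strictly monotone on a small closed interval, and these
intervals can be taken pairwise disjoint. Off them `|φ|` has a positive minimum on the piece, so
for small `δ` the set `{|φ| ≤ δ}` lies inside them, and on each one the substitution `y = φ s`
turns `∫ |ψ| 1{|φ| ≤ δ}` into the length `2δ` of `[-δ, δ]`.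
Hence the integral equals `2δ · #C_S(γ)` exactly for all small `δ > 0`.
-/

open MeasureTheory Filter Set Topology RealInnerProductSpace

/-- The continuous crossing set of a set `S` by a path `γ` on `(0,H)`. -/
def crossSetS {d : ℕ} (H : ℝ) (S : Set (EuclideanSpace ℝ (Fin d)))
    (γ : ℝ → EuclideanSpace ℝ (Fin d)) : Set ℝ :=
  {s : ℝ | s ∈ Set.Ioo 0 H ∧ ContinuousAt γ s ∧ γ s ∈ S}

theorem Set.Finite.exists_pairwiseDisjoint_closedBall_subset {X : Type*} [MetricSpace X]
    {Z : Set X} (hZ : Z.Finite) {V : X → Set X} (hV : ∀ z ∈ Z, V z ∈ 𝓝 z) :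
    ∃ ε : X → ℝ, (∀ z ∈ Z, 0 < ε z ∧ Metric.closedBall z (ε z) ⊆ V z) ∧
      Z.PairwiseDisjoint fun z => Metric.closedBall z (ε z) := by
  obtain ⟨U, hU, hUdisj⟩ := hZ.t2_separation
  have hVU : ∀ z ∈ Z, V z ∩ U z ∈ 𝓝 z :=
    fun z hz => inter_mem (hV z hz) ((hU z).2.mem_nhds (hU z).1)
  choose! ε hε hεsub using fun z hz => Metric.nhds_basis_closedBall.mem_iff.1 (hVU z hz)
  refine ⟨ε, fun z hz => ⟨hε z hz, (hεsub z hz).trans inter_subset_left⟩, ?_⟩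
  exact fun z hz z' hz' hne => (hUdisj hz hz' hne).mono
    ((hεsub z hz).trans inter_subset_right) ((hεsub z' hz').trans inter_subset_right)

theorem Set.PairwiseDisjoint.notMem_biUnion_ball_of_dist_eq {X : Type*} [MetricSpace X]
    {Z : Set X} {ε : X → ℝ} (hd : Z.PairwiseDisjoint fun z => Metric.closedBall z (ε z))
    {z w : X} (hz : z ∈ Z) (hw : dist w z = ε z) : w ∉ ⋃ z' ∈ Z, Metric.ball z' (ε z') := by
  simp only [mem_iUnion, not_exists]
  intro z' hz' hwz'
  rcases eq_or_ne z z' with rfl | hne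
  · exact (Metric.mem_ball.1 hwz').ne hw
  · exact (hd hz hz' hne).ne_of_mem (Metric.mem_closedBall.2 hw.le)
      (Metric.ball_subset_closedBall hwz') rfl

theorem setIntegral_eq_ncard_smul_of_forall_sdiff_eq_zero {X ι E : Type*} [MeasurableSpace X]
    [NormedAddCommGroup E] [NormedSpace ℝ E] {μ : Measure X} {f : X → E} {T : Set X}
    {Z : Set ι} {I : ι → Set X} {c : E} (hZ : Z.Finite) (hT : MeasurableSet T)
    (hI : ∀ z ∈ Z, MeasurableSet (I z) ∧ I z ⊆ T) (hdisj : Z.PairwiseDisjoint I)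
    (hf : ∀ x ∈ T \ ⋃ z ∈ Z, I z, f x = 0) (hfI : ∀ z ∈ Z, IntegrableOn f (I z) μ)
    (hc : ∀ z ∈ Z, ∫ x in I z, f x ∂μ = c) :
    ∫ x in T, f x ∂μ = Z.ncard • c := by
  have hU : ⋃ z ∈ Z, I z = ⋃ z ∈ hZ.toFinset, I z := by simp
  rw [setIntegral_eq_of_subset_of_forall_sdiff_eq_zero hT
      (iUnion₂_subset fun z hz => (hI z hz).2) hf, hU,
    integral_biUnion_finset _ (fun z hz => (hI z (hZ.mem_toFinset.1 hz)).1)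
      (hZ.coe_toFinset.symm ▸ hdisj) (fun z hz => hfI z (hZ.mem_toFinset.1 hz)),
    Finset.sum_congr rfl fun z hz => hc z (hZ.mem_toFinset.1 hz), Finset.sum_const,
    ncard_eq_toFinset_card _ hZ]

theorem strictMonoOn_or_strictAntiOn_of_hasDerivWithinAt_ne_zero {D : Set ℝ} (hD : Convex ℝ D)
    {f f' : ℝ → ℝ} (hf : ∀ x ∈ D, HasDerivWithinAt f (f' x) D x) (hf' : ∀ x ∈ D, f' x ≠ 0) :
    StrictMonoOn f D ∨ StrictAntiOn f D := by
  have hcont : ContinuousOn f D := fun x hx => (hf x hx).continuousWithinAt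
  have hint : ∀ x ∈ interior D, HasDerivWithinAt f (f' x) (interior D) x :=
    fun x hx => (hf x (interior_subset hx)).mono interior_subset
  rcases hasDerivWithinAt_forall_lt_or_forall_gt_of_forall_ne hD hf hf' with hneg | hpos
  · exact .inr <| strictAntiOn_of_hasDerivWithinAt_neg hD hcont hint
      fun x hx => hneg x (interior_subset hx)
  · exact .inl <| strictMonoOn_of_hasDerivWithinAt_pos hD hcont hint
      fun x hx => hpos x (interior_subset hx)

theorem Icc_neg_subset_uIcc {x y δ : ℝ} (h0 : (0 : ℝ) ∈ uIcc x y) (hx : δ < |x|) (hy : δ < |y|) :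
    Icc (-δ) δ ⊆ uIcc x y := by
  intro t ht
  rw [mem_uIcc] at h0 ⊢
  rw [lt_abs] at hx hy
  rcases h0 with h | h <;> [left; right] <;> constructor <;> cases hx <;> cases hy <;>
    linarith [ht.1, ht.2, h.1, h.2]

section Interval

variable {φ ψ : ℝ → ℝ} {a b : ℝ}

theorem integral_Icc_abs_deriv_mul_indicator_eq_two_mul {z δ : ℝ} (hab : a ≤ b)
    (hφ : ∀ s ∈ Icc a b, HasDerivWithinAt φ (ψ s) (Icc a b) s) (hψ : ∀ s ∈ Icc a b, ψ s ≠ 0)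
    (hz : z ∈ Icc a b) (hφz : φ z = 0) (hδ : 0 ≤ δ) (ha : δ < |φ a|) (hb : δ < |φ b|) :
    ∫ s in Icc a b, |ψ s| * {u | |φ u| ≤ δ}.indicator (fun _ => (1 : ℝ)) s = 2 * δ := by
  have hmono := strictMonoOn_or_strictAntiOn_of_hasDerivWithinAt_ne_zero (convex_Icc a b) hφ hψ
  have ha' : a ∈ Icc a b := left_mem_Icc.2 hab
  have hb' : b ∈ Icc a b := right_mem_Icc.2 hab
  have hzero : (0 : ℝ) ∈ uIcc (φ a) (φ b) := by
    rw [← hφz, mem_uIcc]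
    rcases hmono with h | h
    · exact .inl ⟨h.monotoneOn ha' hz hz.1, h.monotoneOn hz hb' hz.2⟩
    · exact .inr ⟨h.antitoneOn hz hb' hz.2, h.antitoneOn ha' hz hz.1⟩
  have himage : Icc (-δ) δ ⊆ φ '' Icc a b := by
    have hcont : ContinuousOn φ (uIcc a b) := by
      rw [uIcc_of_le hab]; exact fun s hs => (hφ s hs).continuousWithinAt
    simpa only [uIcc_of_le hab] using
      (Icc_neg_subset_uIcc hzero ha hb).trans (intermediate_value_uIcc hcont)
  have hinj : InjOn φ (Icc a b) := hmono.elim StrictMonoOn.injOn StrictAntiOn.injOn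
  calc ∫ s in Icc a b, |ψ s| * {u | |φ u| ≤ δ}.indicator (fun _ => (1 : ℝ)) s
      = ∫ s in Icc a b, |ψ s| • (Icc (-δ) δ).indicator 1 (φ s) := by
        congr 1; ext s; simp [indicator, abs_le]
    _ = ∫ x in φ '' Icc a b, (Icc (-δ) δ).indicator 1 x :=
        (integral_image_eq_integral_abs_deriv_smul measurableSet_Icc hφ hinj _).symm
    _ = 2 * δ := by
        rw [integral_indicator_one measurableSet_Icc, measureReal_restrict_apply measurableSet_Icc,
          inter_eq_left.2 himage, Real.volume_real_Icc_of_le (by linarith)]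
        ring

theorem sep_Ioo_eq_sep_Icc_of_ne_zero (ha : φ a ≠ 0) (hb : φ b ≠ 0) :
    {s ∈ Ioo a b | φ s = 0} = {s ∈ Icc a b | φ s = 0} := by
  ext s
  refine ⟨fun ⟨hs, h0⟩ => ⟨Ioo_subset_Icc_self hs, h0⟩, fun ⟨hs, h0⟩ => ⟨⟨?_, ?_⟩, h0⟩⟩
  · exact hs.1.lt_of_ne (by rintro rfl; exact ha h0)
  · exact hs.2.lt_of_ne (by rintro rfl; exact hb h0)

theorem finite_zeros_of_hasDerivWithinAt
    (hφ : ∀ s ∈ Icc a b, HasDerivWithinAt φ (ψ s) (Icc a b) s) (ha : φ a ≠ 0) (hb : φ b ≠ 0)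
    (hψ : ∀ s ∈ Icc a b, φ s = 0 → ψ s ≠ 0) :
    {s ∈ Ioo a b | φ s = 0}.Finite := by
  set Z := {s ∈ Ioo a b | φ s = 0}
  have hZ : Z = Icc a b ∩ φ ⁻¹' {0} := sep_Ioo_eq_sep_Icc_of_ne_zero ha hb
  have hcont : ContinuousOn φ (Icc a b) := fun s hs => (hφ s hs).continuousWithinAt
  have hcompact : IsCompact Z := hZ ▸ isCompact_Icc.of_isClosed_subset
    (hcont.preimage_isClosed_of_isClosed isClosed_Icc isClosed_singleton) inter_subset_left
  refine hcompact.finite (isDiscrete_iff_nhdsNE.2 fun z hz => inf_principal_eq_bot.2 ?_)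
  have hzI : z ∈ Icc a b := Ioo_subset_Icc_self hz.1
  have hderiv : HasDerivAt φ (ψ z) z := (hφ z hzI).hasDerivAt (Icc_mem_nhds hz.1.1 hz.1.2)
  filter_upwards [hderiv.eventually_ne (c := 0) (hψ z hzI hz.2)] with s hs hsZ
  exact hs hsZ.2

theorem integrableOn_abs_mul_indicator_abs_le (δ : ℝ)
    (hφ : ContinuousOn φ (Icc a b)) (hψ : ContinuousOn ψ (Icc a b)) :
    IntegrableOn (fun s => |ψ s| * {u | |φ u| ≤ δ}.indicator (fun _ => (1 : ℝ)) s) (Icc a b) := by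
  have hclosed : IsClosed (Icc a b ∩ (fun u => |φ u|) ⁻¹' Iic δ) :=
    hφ.abs.preimage_isClosed_of_isClosed isClosed_Icc isClosed_Iic
  refine ((hψ.abs.integrableOn_Icc).indicator hclosed.measurableSet).congr_fun
    (fun s hs => ?_) measurableSet_Icc
  by_cases h : |φ s| ≤ δ <;> simp [indicator, hs, h]

theorem integral_abs_deriv_mul_indicator_eq_of_isolating {Z : Set ℝ} {ε : ℝ → ℝ} {m δ : ℝ}
    (hφ : ∀ s ∈ Icc a b, HasDerivWithinAt φ (ψ s) (Icc a b) s) (hψ : ContinuousOn ψ (Icc a b))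
    (hZ : Z.Finite) (hZφ : ∀ z ∈ Z, φ z = 0)
    (hε : ∀ z ∈ Z, 0 < ε z ∧ Metric.closedBall z (ε z) ⊆ Ioo a b ∩ {s | ψ s ≠ 0})
    (hdisj : Z.PairwiseDisjoint fun z => Metric.closedBall z (ε z))
    (hm : ∀ s ∈ Icc a b \ ⋃ z ∈ Z, Metric.ball z (ε z), m ≤ |φ s|) (hδ : δ ∈ Ioo 0 m) :
    ∫ s in Icc a b, |ψ s| * {u | |φ u| ≤ δ}.indicator (fun _ => (1 : ℝ)) s = 2 * δ * Z.ncard := by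
  have hsub : ∀ z ∈ Z, Metric.closedBall z (ε z) ⊆ Icc a b := fun z hz =>
    (hε z hz).2.trans (inter_subset_left.trans Ioo_subset_Icc_self)
  have hcont : ContinuousOn φ (Icc a b) := fun s hs => (hφ s hs).continuousWithinAt
  rw [mul_comm, ← nsmul_eq_mul]
  refine setIntegral_eq_ncard_smul_of_forall_sdiff_eq_zero hZ measurableSet_Icc
    (fun z hz => ⟨measurableSet_closedBall, hsub z hz⟩) hdisj ?_
    (fun z hz => (integrableOn_abs_mul_indicator_abs_le δ hcont hψ).mono_set (hsub z hz))
    fun z hz => ?_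
  · rintro s ⟨hs, hsU⟩
    have hsK : s ∈ Icc a b \ ⋃ z ∈ Z, Metric.ball z (ε z) :=
      ⟨hs, fun h => hsU (biUnion_mono subset_rfl (fun _ _ => Metric.ball_subset_closedBall) h)⟩
    have : ¬|φ s| ≤ δ := (hδ.2.trans_le (hm s hsK)).not_ge
    simp [indicator, this]
  · obtain ⟨hεz, hball⟩ := hε z hz
    have hend : ∀ w, dist w z = ε z → δ < |φ w| := fun w hw => hδ.2.trans_le
      (hm w ⟨hsub z hz (Metric.mem_closedBall.2 hw.le), hdisj.notMem_biUnion_ball_of_dist_eq hz hw⟩)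
    have hsubz := hsub z hz
    rw [Real.closedBall_eq_Icc] at hsubz hball ⊢
    exact integral_Icc_abs_deriv_mul_indicator_eq_two_mul (by linarith)
      (fun s hs => (hφ s (hsubz hs)).mono hsubz) (fun s hs => (hball hs).2)
      ⟨by linarith, by linarith⟩ (hZφ z hz) hδ.1.le
      (hend _ (by simp [abs_of_pos hεz])) (hend _ (by simp [abs_of_pos hεz]))

theorem eventually_integral_abs_deriv_mul_indicator_eq_two_mul_ncard
    (hφ : ∀ s ∈ Icc a b, HasDerivWithinAt φ (ψ s) (Icc a b) s) (hψc : ContinuousOn ψ (Icc a b))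
    (ha : φ a ≠ 0) (hb : φ b ≠ 0) (hψ : ∀ s ∈ Icc a b, φ s = 0 → ψ s ≠ 0) :
    ∀ᶠ δ in 𝓝[>] 0, ∫ s in Icc a b, |ψ s| * {u | |φ u| ≤ δ}.indicator (fun _ => (1 : ℝ)) s =
      2 * δ * {s ∈ Ioo a b | φ s = 0}.ncard := by
  set Z := {s ∈ Ioo a b | φ s = 0}
  have hfin : Z.Finite := finite_zeros_of_hasDerivWithinAt hφ ha hb hψ
  have hcont : ContinuousOn φ (Icc a b) := fun s hs => (hφ s hs).continuousWithinAt
  have hzero_mem : ∀ s ∈ Icc a b, φ s = 0 → s ∈ Z := fun s hs h0 =>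
    (sep_Ioo_eq_sep_Icc_of_ne_zero ha hb).ge ⟨hs, h0⟩
  have hV : ∀ z ∈ Z, Ioo a b ∩ {s | ψ s ≠ 0} ∈ 𝓝 z := fun z hz =>
    inter_mem (Ioo_mem_nhds hz.1.1 hz.1.2) <|
      ((hψc z (Ioo_subset_Icc_self hz.1)).continuousAt (Icc_mem_nhds hz.1.1 hz.1.2)).eventually_ne
        (hψ z (Ioo_subset_Icc_self hz.1) hz.2)
  obtain ⟨ε, hε, hdisj⟩ := hfin.exists_pairwiseDisjoint_closedBall_subset hV
  have hK : IsCompact (Icc a b \ ⋃ z ∈ Z, Metric.ball z (ε z)) :=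
    isCompact_Icc.diff (isOpen_biUnion fun _ _ => Metric.isOpen_ball)
  obtain ⟨m, hm, hKm⟩ := hK.exists_forall_le' (hcont.mono sdiff_subset).abs (a := 0)
    fun s hs => abs_pos.2 fun h0 => hs.2 (mem_biUnion (hzero_mem s hs.1 h0)
      (Metric.mem_ball_self (hε s (hzero_mem s hs.1 h0)).1))
  filter_upwards [Ioo_mem_nhdsGT hm] with δ hδ
  exact integral_abs_deriv_mul_indicator_eq_of_isolating hφ hψc hfin (fun z hz => hz.2) hε hdisj
    hKm hδ

end Interval

theorem ContDiff.continuous_gradient {F : Type*} [NormedAddCommGroup F] [InnerProductSpace ℝ F]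
    [CompleteSpace F] {ρ : F → ℝ} (hρ : ContDiff ℝ 1 ρ) : Continuous (gradient ρ) :=
  (InnerProductSpace.toDual ℝ F).symm.continuous.comp (hρ.continuous_fderiv one_ne_zero)

theorem DifferentiableAt.comp_hasDerivWithinAt_inner_gradient {F : Type*} [NormedAddCommGroup F]
    [InnerProductSpace ℝ F] [CompleteSpace F] {ρ : F → ℝ} {g : ℝ → F} {v : F} {s : Set ℝ} {t : ℝ}
    (hρ : DifferentiableAt ℝ ρ (g t)) (hg : HasDerivWithinAt g v s t) :
    HasDerivWithinAt (fun u => ρ (g u)) ⟪v, gradient ρ (g t)⟫ s t := by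
  rw [real_inner_comm, inner_gradient_left]
  exact hρ.hasFDerivAt.comp_hasDerivWithinAt t hg

theorem kac_counting_integral_curve {F : Type*} [NormedAddCommGroup F] [InnerProductSpace ℝ F]
    [CompleteSpace F] {ρ : F → ℝ} {r : F → F} {g : ℝ → F} {a b : ℝ} (hρ : ContDiff ℝ 1 ρ)
    (hr : Continuous r) (hnt : ∀ z, ρ z = 0 → ⟪r z, gradient ρ z⟫ ≠ 0)
    (hg : ∀ s ∈ Icc a b, HasDerivWithinAt g (r (g s)) (Icc a b) s)
    (ha : ρ (g a) ≠ 0) (hb : ρ (g b) ≠ 0) :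
    {s ∈ Ioo a b | ρ (g s) = 0}.Finite ∧
    (∀ δ, IntegrableOn (fun s => |⟪r (g s), gradient ρ (g s)⟫| *
      {u | |ρ (g u)| ≤ δ}.indicator (fun _ => (1 : ℝ)) s) (Icc a b)) ∧
    ∀ᶠ δ in 𝓝[>] 0, ∫ s in Icc a b, |⟪r (g s), gradient ρ (g s)⟫| *
      {u | |ρ (g u)| ≤ δ}.indicator (fun _ => (1 : ℝ)) s =
        2 * δ * {s ∈ Ioo a b | ρ (g s) = 0}.ncard := by
  have hgc : ContinuousOn g (Icc a b) := fun s hs => (hg s hs).continuousWithinAt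
  have hφ : ∀ s ∈ Icc a b, HasDerivWithinAt (fun u => ρ (g u)) ⟪r (g s), gradient ρ (g s)⟫
      (Icc a b) s := fun s hs =>
    (hρ.differentiable one_ne_zero _).comp_hasDerivWithinAt_inner_gradient (hg s hs)
  have hψ : ContinuousOn (fun s => ⟪r (g s), gradient ρ (g s)⟫) (Icc a b) :=
    (hr.inner hρ.continuous_gradient).comp_continuousOn hgc
  have hnz : ∀ s ∈ Icc a b, ρ (g s) = 0 → ⟪r (g s), gradient ρ (g s)⟫ ≠ 0 :=
    fun s _ => hnt (g s)
  exact ⟨finite_zeros_of_hasDerivWithinAt hφ ha hb hnz,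
    fun δ => integrableOn_abs_mul_indicator_abs_le δ (hρ.continuous.comp_continuousOn hgc) hψ,
    eventually_integral_abs_deriv_mul_indicator_eq_two_mul_ncard hφ hψ ha hb hnz⟩

theorem MonotoneOn.pairwiseDisjoint_Ioo_add_one {α : Type*} [Preorder α] {τ : ℕ → α} {n : ℕ}
    (hτ : MonotoneOn τ (Iic n)) : (Iio n).PairwiseDisjoint fun i => Ioo (τ i) (τ (i + 1)) := by
  intro i hi j hj hne
  wlog hij : i < j generalizing i j
  · exact (this hj hi hne.symm (hne.lt_or_gt.resolve_left hij)).symm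
  refine disjoint_left.2 fun s hsi hsj => (hsj.1.trans hsi.2).not_ge ?_
  exact hτ (mem_Iic.2 (Nat.succ_le_of_lt hi)) (mem_Iic.2 (le_of_lt hj)) hij

theorem exists_mem_Ico_of_mem_Ico {α : Type*} [LinearOrder α] {τ : ℕ → α} {n : ℕ} {s : α}
    (hs : s ∈ Ico (τ 0) (τ n)) : ∃ i < n, s ∈ Ico (τ i) (τ (i + 1)) := by
  induction n with
  | zero => exact absurd hs.2 hs.1.not_gt
  | succ n ih =>
    by_cases h : τ n ≤ s
    · exact ⟨n, n.lt_succ_self, h, hs.2⟩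
    · obtain ⟨i, hi, hsi⟩ := ih ⟨hs.1, not_le.1 h⟩
      exact ⟨i, hi.trans n.lt_succ_self, hsi⟩

theorem integral_Icc_eq_sum_of_eqOn_Ioo {E : Type*} [NormedAddCommGroup E] [NormedSpace ℝ E]
    {f : ℝ → E} {F : ℕ → ℝ → E} {τ : ℕ → ℝ} {n : ℕ} {a b : ℝ} (hτ0 : τ 0 = a) (hτn : τ n = b)
    (hτ : MonotoneOn τ (Iic n))
    (hF : ∀ i < n, IntegrableOn (F i) (Icc (τ i) (τ (i + 1))))
    (hfF : ∀ i < n, EqOn f (F i) (Ioo (τ i) (τ (i + 1)))) :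
    ∫ s in Icc a b, f s = ∑ i ∈ Finset.range n, ∫ s in Icc (τ i) (τ (i + 1)), F i s := by
  have hpiece : ∀ i < n, IntervalIntegrable f volume (τ i) (τ (i + 1)) ∧
      ∫ s in τ i..τ (i + 1), f s = ∫ s in Icc (τ i) (τ (i + 1)), F i s := by
    intro i hi
    have hle : τ i ≤ τ (i + 1) := hτ (mem_Iic.2 hi.le) (mem_Iic.2 hi) i.le_succ
    refine ⟨(intervalIntegrable_iff_integrableOn_Ioo_of_le hle).2
      (((hF i hi).mono_set Ioo_subset_Icc_self).congr_fun (hfF i hi).symm measurableSet_Ioo), ?_⟩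
    rw [intervalIntegral.integral_of_le hle, integral_Ioc_eq_integral_Ioo,
      setIntegral_congr_fun measurableSet_Ioo (hfF i hi), integral_Icc_eq_integral_Ioo]
  subst hτ0 hτn
  rw [integral_Icc_eq_integral_Ioc, ← intervalIntegral.integral_of_le
      (hτ (mem_Iic.2 n.zero_le) (mem_Iic.2 le_rfl) n.zero_le),
    ← intervalIntegral.sum_integral_adjacent_intervals fun i hi => (hpiece i hi).1]
  exact Finset.sum_congr rfl fun i hi => (hpiece i (Finset.mem_range.1 hi)).2

theorem ncard_biUnion_range {α : Type*} {Z : ℕ → Set α} {n : ℕ} (hZ : ∀ i < n, (Z i).Finite)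
    (hdisj : (Iio n).PairwiseDisjoint Z) :
    (⋃ i ∈ Finset.range n, Z i).ncard = ∑ i ∈ Finset.range n, (Z i).ncard := by
  rw [← finsum_mem_coe_finset, ← Finite.ncard_biUnion (Finset.finite_toSet _)]
  · simp
  · simpa using hZ
  · simpa using hdisj

theorem crossSetS_eq_biUnion {d k : ℕ} {H : ℝ} {S : Set (EuclideanSpace ℝ (Fin d))}
    {τ : ℕ → ℝ} {g : ℕ → ℝ → EuclideanSpace ℝ (Fin d)} {γ : ℝ → EuclideanSpace ℝ (Fin d)}
    (hτ0 : τ 0 = 0) (hτH : τ (k + 1) = H) (hτ : MonotoneOn τ (Iic (k + 1)))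
    (hg : ∀ i ≤ k, ContinuousOn (g i) (Icc (τ i) (τ (i + 1))))
    (hγg : ∀ i ≤ k, ∀ s ∈ Ico (τ i) (τ (i + 1)), γ s = g i s)
    (havoid : ∀ i ≤ k, g i (τ i) ∉ S) :
    crossSetS H S γ = ⋃ i ∈ Finset.range (k + 1), {s ∈ Ioo (τ i) (τ (i + 1)) | g i s ∈ S} := by
  ext s
  simp only [crossSetS, mem_ofPred_eq, mem_iUnion, Finset.mem_range, exists_prop, Nat.lt_succ_iff]
  constructor
  · rintro ⟨hs, -, hsS⟩
    obtain ⟨i, hi, hsi⟩ := exists_mem_Ico_of_mem_Ico (τ := τ) (n := k + 1)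
      ⟨hτ0 ▸ hs.1.le, hτH ▸ hs.2⟩
    rw [hγg i (Nat.lt_succ_iff.1 hi) s hsi] at hsS
    refine ⟨i, Nat.lt_succ_iff.1 hi, ⟨hsi.1.lt_of_ne ?_, hsi.2⟩, hsS⟩
    rintro rfl
    exact havoid i (Nat.lt_succ_iff.1 hi) hsS
  · rintro ⟨i, hi, hsi, hsS⟩
    have hγ : γ =ᶠ[𝓝 s] g i := eventually_of_mem (Ioo_mem_nhds hsi.1 hsi.2)
      fun t ht => hγg i hi t (Ioo_subset_Ico_self ht)
    refine ⟨⟨?_, ?_⟩, ((hg i hi).continuousAt (Icc_mem_nhds hsi.1 hsi.2)).congr hγ.symm,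
      hγ.eq_of_nhds ▸ hsS⟩
    · exact hτ0 ▸ (hτ (mem_Iic.2 (by omega)) (mem_Iic.2 (by omega)) i.zero_le).trans_lt hsi.1
    · exact hτH ▸ hsi.2.trans_le (hτ (mem_Iic.2 (by omega)) (mem_Iic.2 le_rfl) (by omega))

theorem kac_counting_hypersurface_pathwise_general
    (d : ℕ) (H : ℝ)
    (ρ : EuclideanSpace ℝ (Fin d) → ℝ) (hρ : ContDiff ℝ 1 ρ)
    (r : EuclideanSpace ℝ (Fin d) → EuclideanSpace ℝ (Fin d)) (hr : Continuous r)
    (hnt : ∀ z, ρ z = 0 → ⟪r z, gradient ρ z⟫ ≠ 0)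
    (k : ℕ) (τ : ℕ → ℝ) (g : ℕ → ℝ → EuclideanSpace ℝ (Fin d))
    (γ : ℝ → EuclideanSpace ℝ (Fin d))
    (hτ0 : τ 0 = 0) (hτH : τ (k+1) = H)
    (hτmono : ∀ i ≤ k, τ i < τ (i+1))
    (hderiv : ∀ i ≤ k, ∀ s ∈ Icc (τ i) (τ (i+1)),
      HasDerivWithinAt (g i) (r (g i s)) (Icc (τ i) (τ (i+1))) s)
    (hγg : ∀ i ≤ k, ∀ s ∈ Ico (τ i) (τ (i+1)), γ s = g i s)
    (havoid : ∀ i ≤ k, ρ (g i (τ i)) ≠ 0 ∧ ρ (g i (τ (i+1))) ≠ 0) :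
    (crossSetS H (ρ ⁻¹' {0}) γ).Finite ∧
    Tendsto
      (fun δ : ℝ => (1 / (2 * δ)) *
        ∫ s in Icc (0:ℝ) H,
          |⟪r (γ s), gradient ρ (γ s)⟫| *
            ({u : ℝ | |ρ (γ u)| ≤ δ}.indicator (fun _ => (1:ℝ)) s))
      (𝓝[>] (0:ℝ))
      (𝓝 (((crossSetS H (ρ ⁻¹' {0}) γ).ncard : ℝ))) := by
  have hτ : MonotoneOn τ (Iic (k + 1)) :=
    (strictMonoOn_Iic_of_lt_succ fun i hi => hτmono i (Nat.lt_succ_iff.1 hi)).monotoneOn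
  have hpiece := fun i (hi : i < k + 1) => kac_counting_integral_curve hρ hr hnt
    (hderiv i (Nat.lt_succ_iff.1 hi)) (havoid i (Nat.lt_succ_iff.1 hi)).1
    (havoid i (Nat.lt_succ_iff.1 hi)).2
  have hcross : crossSetS H (ρ ⁻¹' {0}) γ =
      ⋃ i ∈ Finset.range (k + 1), {s ∈ Ioo (τ i) (τ (i + 1)) | ρ (g i s) = 0} :=
    crossSetS_eq_biUnion hτ0 hτH hτ
    (fun i hi s hs => (hderiv i hi s hs).continuousWithinAt) hγg (fun i hi => (havoid i hi).1)
  refine ⟨hcross ▸ (Finset.finite_toSet _).biUnion fun i hi => (hpiece i (by simpa using hi)).1, ?_⟩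
  rw [hcross, ncard_biUnion_range (fun i hi => (hpiece i hi).1)
    (hτ.pairwiseDisjoint_Ioo_add_one.mono_on fun i _ => sep_subset _ _)]
  refine tendsto_const_nhds.congr' ?_
  filter_upwards [(eventually_all_finset _).2 fun i hi => (hpiece i (Finset.mem_range.1 hi)).2.2,
    self_mem_nhdsWithin] with δ hδ (hδpos : 0 < δ)
  rw [integral_Icc_eq_sum_of_eqOn_Ioo hτ0 hτH hτ (fun i hi => (hpiece i hi).2.1 δ)
    fun i hi s hs => by
      simp only [indicator, mem_ofPred_eq, hγg i (Nat.lt_succ_iff.1 hi) s (Ioo_subset_Ico_self hs)],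
    Finset.sum_congr rfl hδ, ← Finset.mul_sum]
  push_cast
  field_simp

/-- **Pathwise Kac counting formula for hypersurface crossings via a defining function.** -/
theorem kac_counting_hypersurface_pathwise
    (d : ℕ) (hd : 1 ≤ d) (H : ℝ) (hH : 0 < H)
    (ρ : EuclideanSpace ℝ (Fin d) → ℝ) (hρ : ContDiff ℝ 1 ρ)
    (r : EuclideanSpace ℝ (Fin d) → EuclideanSpace ℝ (Fin d)) (hr : Continuous r)
    (hnt : ∀ z, ρ z = 0 → ⟪r z, gradient ρ z⟫ ≠ 0)
    (k : ℕ) (τ : ℕ → ℝ) (g : ℕ → ℝ → EuclideanSpace ℝ (Fin d))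
    (γ : ℝ → EuclideanSpace ℝ (Fin d))
    (hτ0 : τ 0 = 0) (hτH : τ (k+1) = H)
    (hτmono : ∀ i ≤ k, τ i < τ (i+1))
    (hderiv : ∀ i ≤ k, ∀ s ∈ Icc (τ i) (τ (i+1)),
      HasDerivWithinAt (g i) (r (g i s)) (Icc (τ i) (τ (i+1))) s)
    (hγg : ∀ i ≤ k, ∀ s ∈ Ico (τ i) (τ (i+1)), γ s = g i s)
    (hγH : γ H = g k H)
    (havoid : ∀ i ≤ k, ρ (g i (τ i)) ≠ 0 ∧ ρ (g i (τ (i+1))) ≠ 0) :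
    (crossSetS H (ρ ⁻¹' {0}) γ).Finite ∧
    Tendsto
      (fun δ : ℝ => (1 / (2 * δ)) *
        ∫ s in Icc (0:ℝ) H,
          |⟪r (γ s), gradient ρ (γ s)⟫| *
            ({u : ℝ | |ρ (γ u)| ≤ δ}.indicator (fun _ => (1:ℝ)) s))
      (𝓝[>] (0:ℝ))
      (𝓝 (((crossSetS H (ρ ⁻¹' {0}) γ).ncard : ℝ))) :=
  kac_counting_hypersurface_pathwise_general d H ρ hρ r hr hnt k τ g γ hτ0 hτH hτmono hderiv hγg
    havoid
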